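/- (Jirásek–Grassl plastic correction, forward direction.) Assume ϱ^tr > 0 and f̂(p^tr, ϱ^tr, ϱ_e(σ^tr)) > 0. If (σ, Δλ) with Δλ > 0 satisfies σ = σ^tr − Δλ·[K·(m_g'(p(σ))/f̄_c)·I + 2G·(3ϱ(σ)/f̄_c² + m₀/(√6·f̄_c))·n̂] for some n̂ ∈ ∂ϱ(σ) and f̂(p(σ), ϱ(σ), ϱ_e(σ)) = 0, then, writing p = p(σ) and ϱ = ϱ(σ), the triple (p, ϱ, Δλ) solves the reduced system: p = p^tr − Δλ·K·m_g'(p)/f̄_c, ϱ = max(0, ϱ^tr − Δλ·2G·(3ϱ/f̄_c² + m₀/(√6·f̄_c))), and f̂(p, ϱ, ϱ·r_e(cos θ(σ^tr))) = 0. -/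
import Mathlib


open Matrix

noncomputable section

/-- The space of real 3×3 matrices (we restrict to symmetric ones via `Matrix.IsSymm`). -/
abbrev Mat3 := Matrix (Fin 3) (Fin 3) ℝ

/-- Frobenius inner product (for symmetric matrices): ⟨A,B⟩ = tr(A·B). -/
def finner (A B : Mat3) : ℝ := (A * B).trace

/-- Norm induced by `finner` (Frobenius norm on symmetric matrices). -/
def fnorm (A : Mat3) : ℝ := Real.sqrt (finner A A)

/-- Hydrostatic pressure: p(σ) = tr(σ)/3. -/
def pvol (σ : Mat3) : ℝ := σ.trace / 3

/-- Deviatoric part: dev(σ) = σ − p(σ)·I. -/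
def devm (σ : Mat3) : Mat3 := σ - pvol σ • (1 : Mat3)

/-- ϱ(σ) = ‖dev(σ)‖. -/
def rho (σ : Mat3) : ℝ := fnorm (devm σ)

/-- The subdifferential ∂ϱ(σ): symmetric matrices n̂ with
ϱ(τ) ≥ ϱ(σ) + ⟨n̂, τ − σ⟩ for all symmetric τ. -/
def subgradRho (σ : Mat3) : Set Mat3 :=
  {n : Mat3 | n.IsSymm ∧ ∀ τ : Mat3, τ.IsSymm → rho σ + finner n (τ - σ) ≤ rho τ}

/-- Lode angle θ(σ) = (1/3)·arccos((3√3/2)·J₃/J₂^{3/2}), with J₂ = ϱ²/2 and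
J₃ = tr(dev(σ)³)/3 (meaningful when ϱ(σ) > 0). -/
def lode (σ : Mat3) : ℝ :=
  (1/3) * Real.arccos ((3 * Real.sqrt 3 / 2) *
    ((devm σ * devm σ * devm σ).trace / 3) / Real.rpow (rho σ ^ 2 / 2) (3/2))

/-- Willam–Warnke function r_e with eccentricity parameter e. -/
def rW (e x : ℝ) : ℝ :=
  (4 * (1 - e^2) * x^2 + (2*e - 1)^2) /
    (2 * (1 - e^2) * x + (2*e - 1) * Real.sqrt (4 * (1 - e^2) * x^2 + 5*e^2 - 4*e))

/-- ϱ_e(σ) = ϱ(σ)·r_e(cos θ(σ)) for ϱ(σ) > 0, and ϱ_e(σ) = 0 for ϱ(σ) = 0. -/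
def rhoE (e : ℝ) (σ : Mat3) : ℝ :=
  if rho σ = 0 then 0 else rho σ * rW e (Real.cos (lode σ))

/-- m_g'(p) = A_g·exp((p − f̄_t/3)/(B_g·f̄_c)). -/
def mgp (Ag Bg fc ft p : ℝ) : ℝ := Ag * Real.exp ((p - ft/3) / (Bg * fc))

/-- Jirásek–Grassl yield function f̂(p,ϱ,ϱ_e) = (3/2)(ϱ/f̄_c)² + m₀(ϱ_e/(√6 f̄_c) + p/f̄_c) − 1. -/
def fJG (m0 fc p ϱ ϱe : ℝ) : ℝ :=
  (3/2) * (ϱ/fc)^2 + m0 * (ϱe / (Real.sqrt 6 * fc) + p/fc) - 1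

-- helper lemmas
lemma finner_comm (A B : Mat3) : finner A B = finner B A := Matrix.trace_mul_comm A B

lemma finner_self_eq (A : Mat3) (hA : A.IsSymm) :
    finner A A = ∑ i, ∑ j, (A i j)^2 := by
  simp only [finner, Matrix.trace, Matrix.diag, Matrix.mul_apply]
  refine Finset.sum_congr rfl fun i _ => Finset.sum_congr rfl fun j _ => ?_
  rw [hA.apply, sq]

lemma finner_self_nonneg (A : Mat3) (hA : A.IsSymm) : 0 ≤ finner A A := by
  rw [finner_self_eq A hA]
  positivity

lemma finner_self_eq_zero (A : Mat3) (hA : A.IsSymm) (h : finner A A = 0) : A = 0 := by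
  rw [finner_self_eq A hA] at h
  ext i j
  have h1 : ∀ i ∈ (Finset.univ : Finset (Fin 3)), (0:ℝ) ≤ ∑ j, (A i j)^2 := by
    intro i _; positivity
  have := (Finset.sum_eq_zero_iff_of_nonneg h1).mp h i (Finset.mem_univ i)
  have h2 : ∀ j ∈ (Finset.univ : Finset (Fin 3)), (0:ℝ) ≤ (A i j)^2 := by
    intro j _; positivity
  have := (Finset.sum_eq_zero_iff_of_nonneg h2).mp this j (Finset.mem_univ j)
  have := pow_eq_zero_iff (n := 2) (by norm_num) |>.mp this
  simpa using this

lemma fnorm_nonneg (A : Mat3) : 0 ≤ fnorm A := Real.sqrt_nonneg _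

lemma fnorm_sq (A : Mat3) (hA : A.IsSymm) : fnorm A ^ 2 = finner A A :=
  Real.sq_sqrt (finner_self_nonneg A hA)

lemma fnorm_smul (t : ℝ) (A : Mat3) : fnorm (t • A) = |t| * fnorm A := by
  have : finner (t • A) (t • A) = t^2 * finner A A := by
    simp only [finner, Matrix.smul_mul, Matrix.mul_smul, smul_smul, Matrix.trace_smul,
      smul_eq_mul]
    ring
  rw [fnorm, this, fnorm, Real.sqrt_mul (sq_nonneg t), Real.sqrt_sq_eq_abs]

lemma finner_add_right (A B C : Mat3) : finner A (B + C) = finner A B + finner A C := by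
  simp [finner, Matrix.mul_add]

lemma finner_sub_right (A B C : Mat3) : finner A (B - C) = finner A B - finner A C := by
  simp [finner, Matrix.mul_sub]

lemma finner_smul_right (t : ℝ) (A B : Mat3) : finner A (t • B) = t * finner A B := by
  simp [finner, Matrix.mul_smul]

lemma finner_smul_left (t : ℝ) (A B : Mat3) : finner (t • A) B = t * finner A B := by
  simp [finner, Matrix.smul_mul]

lemma finner_one_right (A : Mat3) : finner A 1 = A.trace := by
  simp [finner]

lemma finner_zero_right (A : Mat3) : finner A 0 = 0 := by
  simp [finner]

lemma pvol_smul (t : ℝ) (A : Mat3) : pvol (t • A) = t * pvol A := by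
  simp [pvol, Matrix.trace_smul]; ring

lemma pvol_add (A B : Mat3) : pvol (A + B) = pvol A + pvol B := by
  simp [pvol, Matrix.trace_add]; ring

lemma pvol_sub (A B : Mat3) : pvol (A - B) = pvol A - pvol B := by
  simp [pvol, Matrix.trace_sub]; ring

lemma pvol_one : pvol (1 : Mat3) = 1 := by
  simp [pvol, Matrix.trace_one]

lemma devm_sub (A B : Mat3) : devm (A - B) = devm A - devm B := by
  simp only [devm, pvol_sub, sub_smul]; module

lemma devm_add (A B : Mat3) : devm (A + B) = devm A + devm B := by
  simp only [devm, pvol_add, add_smul]; module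

lemma devm_smul (t : ℝ) (A : Mat3) : devm (t • A) = t • devm A := by
  simp only [devm, pvol_smul, smul_sub, mul_smul]

lemma devm_one : devm (1 : Mat3) = 0 := by
  simp [devm, pvol_one]

lemma devm_trace_zero (A : Mat3) (h : A.trace = 0) : devm A = A := by
  simp [devm, pvol, h]

lemma devm_isSymm (A : Mat3) (hA : A.IsSymm) : (devm A).IsSymm := by
  unfold devm
  exact (hA.sub ((Matrix.isSymm_one).smul _ ))

lemma rho_nonneg (A : Mat3) : 0 ≤ rho A := Real.sqrt_nonneg _

lemma rho_smul_one_add (σ₀ : Mat3) (t : ℝ) : rho (σ₀ + t • (1 : Mat3)) = rho σ₀ := by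
  unfold rho
  congr 1
  rw [devm_add, devm_smul, devm_one, smul_zero, add_zero]

lemma finner_CS (A B : Mat3) (hA : A.IsSymm) (hB : B.IsSymm) :
    finner A B ^ 2 ≤ finner A A * finner B B := by
  have hq : ∀ t : ℝ, 0 ≤ finner B B * (t * t) + (2 * finner A B) * t + finner A A := by
    intro t
    have hs : (A + t • B).IsSymm := hA.add (hB.smul t)
    have h0 := finner_self_nonneg _ hs
    have hexp : finner (A + t • B) (A + t • B)
        = finner B B * (t * t) + (2 * finner A B) * t + finner A A := by
      simp only [finner_add_right, finner_smul_right]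
      have h1 : finner (A + t • B) A = finner A A + t * finner B A := by
        simp [finner, Matrix.add_mul, Matrix.smul_mul, Matrix.trace_add, Matrix.trace_smul]
      have h2 : finner (A + t • B) B = finner A B + t * finner B B := by
        simp [finner, Matrix.add_mul, Matrix.smul_mul, Matrix.trace_add, Matrix.trace_smul]
      rw [h1, h2, finner_comm B A]; ring
    linarith [hexp ▸ h0]
  have := discrim_le_zero (a := finner B B) (b := 2*finner A B) (c := finner A A) hq
  unfold discrim at this
  nlinarith [this]

lemma finner_le_fnorm (A B : Mat3) (hA : A.IsSymm) (hB : B.IsSymm) :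
    finner A B ≤ fnorm A * fnorm B := by
  have hcs := finner_CS A B hA hB
  have h1 : finner A B ≤ |finner A B| := le_abs_self _
  have h2 : |finner A B| = Real.sqrt (finner A B ^ 2) := (Real.sqrt_sq_eq_abs _).symm
  have h3 : Real.sqrt (finner A B ^ 2) ≤ Real.sqrt (finner A A * finner B B) :=
    Real.sqrt_le_sqrt hcs
  have h4 : Real.sqrt (finner A A * finner B B) = fnorm A * fnorm B := by
    rw [fnorm, fnorm, ← Real.sqrt_mul (finner_self_nonneg A hA)]
  linarith

lemma fnorm_add_le (A B : Mat3) (hA : A.IsSymm) (hB : B.IsSymm) :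
    fnorm (A + B) ≤ fnorm A + fnorm B := by
  have hAB : (A + B).IsSymm := hA.add hB
  have hexp : finner (A + B) (A + B) = finner A A + 2 * finner A B + finner B B := by
    simp only [finner_add_right]
    have h1 : finner (A + B) A = finner A A + finner B A := by
      simp [finner, Matrix.add_mul, Matrix.trace_add]
    have h2 : finner (A + B) B = finner A B + finner B B := by
      simp [finner, Matrix.add_mul, Matrix.trace_add]
    rw [h1, h2, finner_comm B A]; ring
  have hle : finner (A + B) (A + B) ≤ (fnorm A + fnorm B) ^ 2 := by
    rw [hexp]
    have := finner_le_fnorm A B hA hB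
    have e1 := fnorm_sq A hA
    have e2 := fnorm_sq B hB
    nlinarith
  calc fnorm (A + B) = Real.sqrt (finner (A + B) (A + B)) := rfl
    _ ≤ Real.sqrt ((fnorm A + fnorm B) ^ 2) := Real.sqrt_le_sqrt hle
    _ = fnorm A + fnorm B := by
        rw [Real.sqrt_sq (add_nonneg (fnorm_nonneg A) (fnorm_nonneg B))]

lemma finner_sub_left (A B C : Mat3) : finner (A - B) C = finner A C - finner B C := by
  simp [finner, Matrix.sub_mul]

lemma rpow_scale (μ x : ℝ) (hμ : 0 ≤ μ) (hx : 0 ≤ x) :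
    Real.rpow (μ^2 * x) (3/2) = μ^3 * Real.rpow x (3/2) := by
  show (μ^2 * x) ^ ((3:ℝ)/2) = μ^3 * x ^ ((3:ℝ)/2)
  rw [Real.mul_rpow (by positivity) hx]
  congr 1
  rw [← Real.rpow_natCast μ 2, ← Real.rpow_mul hμ,
    show ((2:ℕ):ℝ) * ((3:ℝ)/2) = ((3:ℕ):ℝ) by norm_num, Real.rpow_natCast]
/-- Jirásek–Grassl plastic correction, forward direction. -/
theorem JG_plastic_corrector_forward
    (G K m0 fc Ag Bg ft e : ℝ)
    (hG : 0 < G) (hK : 0 < K) (hm0 : 0 < m0) (hfc : 0 < fc)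
    (hAg : 0 < Ag) (hBg : 0 < Bg) (hft : 0 ≤ ft) (he : e ∈ Set.Icc (1/2 : ℝ) 1)
    (σtr : Mat3) (hσtr : σtr.IsSymm) (hϱtr : 0 < rho σtr)
    (htrial : 0 < fJG m0 fc (pvol σtr) (rho σtr) (rhoE e σtr))
    (σ : Mat3) (hσ : σ.IsSymm) (Δl : ℝ) (hΔl : 0 < Δl)
    (n : Mat3) (hn : n ∈ subgradRho σ)
    (hσeq : σ = σtr - Δl • ((K * mgp Ag Bg fc ft (pvol σ) / fc) • (1 : Mat3) +
      (2 * G * (3 * rho σ / fc^2 + m0 / (Real.sqrt 6 * fc))) • n))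
    (hf : fJG m0 fc (pvol σ) (rho σ) (rhoE e σ) = 0) :
    pvol σ = pvol σtr - Δl * K * mgp Ag Bg fc ft (pvol σ) / fc ∧
    rho σ = max 0 (rho σtr - Δl * (2 * G * (3 * rho σ / fc^2 + m0 / (Real.sqrt 6 * fc)))) ∧
    fJG m0 fc (pvol σ) (rho σ) (rho σ * rW e (Real.cos (lode σtr))) = 0 := by
  obtain ⟨hnsym, hsub⟩ := hn
  set c := 2 * G * (3 * rho σ / fc^2 + m0 / (Real.sqrt 6 * fc)) with hcdef
  -- trace of n is zero
  have htrn : n.trace = 0 := by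
    have key : ∀ t : ℝ, t * n.trace ≤ 0 := by
      intro t
      have hτ : (σ + t • (1:Mat3)).IsSymm := hσ.add (Matrix.isSymm_one.smul t)
      have h := hsub _ hτ
      rw [rho_smul_one_add, add_sub_cancel_left, finner_smul_right, finner_one_right] at h
      linarith
    linarith [key 1, key (-1)]
  have hc : 0 < c := by
    have hρnn := rho_nonneg σ
    have h6 : (0:ℝ) < Real.sqrt 6 := Real.sqrt_pos.mpr (by norm_num)
    have h1 : 0 < m0 / (Real.sqrt 6 * fc) := by positivity
    have h2 : 0 ≤ 3 * rho σ / fc^2 := by positivity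
    rw [hcdef]
    exact mul_pos (by positivity) (by linarith)
  -- conclusion 1
  have hp : pvol σ = pvol σtr - Δl * K * mgp Ag Bg fc ft (pvol σ) / fc := by
    have h := congrArg pvol hσeq
    rw [pvol_sub, pvol_smul, pvol_add, pvol_smul, pvol_smul, pvol_one] at h
    have hpn : pvol n = 0 := by simp [pvol, htrn]
    rw [hpn] at h
    linear_combination h
  -- deviatoric equation
  have hdev : devm σ = devm σtr - (Δl * c) • n := by
    have h := congrArg devm hσeq
    rw [devm_sub, devm_smul, devm_add, devm_smul, devm_smul, devm_one, smul_zero,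
      devm_trace_zero n htrn, zero_add, smul_smul] at h
    exact h
  -- subgradient facts
  have hσ0 : (0:Mat3).IsSymm := by simp [Matrix.IsSymm]
  have hrho0 : rho (0:Mat3) = 0 := by
    simp [rho, devm, pvol, fnorm, finner]
  have hrho2 : rho (σ + σ) = 2 * rho σ := by
    unfold rho
    rw [devm_add, ← two_smul ℝ (devm σ), fnorm_smul]
    norm_num
  have hfs : finner n σ = rho σ := by
    have hlow := hsub 0 hσ0
    have hup := hsub (σ + σ) (hσ.add hσ)
    rw [hrho0, zero_sub] at hlow
    have hneg : finner n (-σ) = -finner n σ := by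
      simp [finner, Matrix.mul_neg]
    rw [hneg] at hlow
    rw [hrho2, add_sub_cancel_left] at hup
    linarith
  have hns : finner n (devm σ) = rho σ := by
    rw [devm, finner_sub_right, finner_smul_right, finner_one_right, htrn,
      mul_zero, sub_zero, hfs]
  have hnn : finner n n ≤ 1 := by
    have h := hsub (σ + n) (hσ.add hnsym)
    rw [add_sub_cancel_left] at h
    have hr : rho (σ + n) ≤ rho σ + fnorm n := by
      unfold rho
      rw [devm_add, devm_trace_zero n htrn]
      exact fnorm_add_le _ _ (devm_isSymm σ hσ) hnsym
    have hx : finner n n ≤ fnorm n := by linarith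
    have hx0 : 0 ≤ finner n n := finner_self_nonneg n hnsym
    have hfn : fnorm n = Real.sqrt (finner n n) := rfl
    nlinarith [Real.sq_sqrt hx0, Real.sqrt_nonneg (finner n n),
      sq_nonneg (Real.sqrt (finner n n) - 1)]
  have hsymms : (devm σ).IsSymm := devm_isSymm σ hσ
  have hss : finner (devm σ) (devm σ) = rho σ ^ 2 := by
    rw [← fnorm_sq _ hsymms]; rfl
  rcases eq_or_lt_of_le (rho_nonneg σ) with hρ0 | hρpos
  · -- case rho σ = 0
    have hs0 : devm σ = 0 := by
      apply finner_self_eq_zero _ hsymms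
      rw [hss, ← hρ0]; ring
    have hst0 : devm σtr = (Δl * c) • n := by
      have h2 : devm σtr - (Δl * c) • n = 0 := hdev.symm.trans hs0
      exact sub_eq_zero.mp h2
    have hfn1 : fnorm n ≤ 1 := by
      calc fnorm n = Real.sqrt (finner n n) := rfl
        _ ≤ Real.sqrt 1 := Real.sqrt_le_sqrt hnn
        _ = 1 := Real.sqrt_one
    have hΔc : 0 < Δl * c := mul_pos hΔl hc
    have hρtr_le : rho σtr ≤ Δl * c := by
      have h1 : rho σtr = |Δl * c| * fnorm n := by
        show fnorm (devm σtr) = _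
        rw [hst0, fnorm_smul]
      rw [h1, abs_of_pos hΔc]
      nlinarith [fnorm_nonneg n]
    refine ⟨hp, ?_, ?_⟩
    · rw [← hρ0, max_eq_left (by linarith)]
    · have h0 : rhoE e σ = 0 := by rw [rhoE, if_pos hρ0.symm]
      rw [← hρ0, zero_mul]
      rw [h0, ← hρ0] at hf
      exact hf
  · -- case rho σ > 0
    have hρne : rho σ ≠ 0 := ne_of_gt hρpos
    have hkey : rho σ • n = devm σ := by
      have hDsymm : (rho σ • n - devm σ).IsSymm := (hnsym.smul _).sub hsymms
      have hDval : finner (rho σ • n - devm σ) (rho σ • n - devm σ)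
          = rho σ ^ 2 * (finner n n - 1) := by
        rw [finner_sub_right, finner_sub_left, finner_sub_left, finner_smul_left,
          finner_smul_left, finner_smul_right, finner_smul_right, finner_comm (devm σ) n,
          hns, hss]
        ring
      have h1 : finner (rho σ • n - devm σ) (rho σ • n - devm σ) ≤ 0 := by
        rw [hDval]
        nlinarith
      have h2 := finner_self_nonneg _ hDsymm
      have h3 : rho σ • n - devm σ = 0 := finner_self_eq_zero _ hDsymm (le_antisymm h1 h2)
      exact sub_eq_zero.mp h3
    have hst : rho σ • devm σtr = (rho σ + Δl * c) • devm σ := by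
      have h4 : devm σtr = devm σ + (Δl * c) • n := by
        rw [hdev]; module
      rw [h4, smul_add, smul_comm (rho σ) (Δl * c) n, hkey, add_smul]
    have hρΔc : 0 ≤ rho σ + Δl * c := by positivity
    have hnormeq : rho σ * rho σtr = (rho σ + Δl * c) * rho σ := by
      have h1 := congrArg fnorm hst
      rw [fnorm_smul, fnorm_smul, abs_of_pos hρpos, abs_of_nonneg hρΔc] at h1
      exact h1
    have hρtr_eq : rho σtr = rho σ + Δl * c := by
      have h2 : rho σ * rho σtr = rho σ * (rho σ + Δl * c) := by linarith [hnormeq]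
      exact mul_left_cancel₀ hρne h2
    -- lode angle equality
    obtain ⟨μ, hμpos, hstμ, hρtrμ⟩ :
        ∃ μ : ℝ, 0 < μ ∧ devm σtr = μ • devm σ ∧ rho σtr = μ * rho σ := by
      refine ⟨(rho σ + Δl * c) / rho σ,
        div_pos (by nlinarith [mul_pos hΔl hc]) hρpos, ?_, ?_⟩
      · have h2 := congrArg (fun M : Mat3 => (rho σ)⁻¹ • M) hst
        simp only [smul_smul] at h2
        rw [inv_mul_cancel₀ hρne, one_smul] at h2
        rw [h2, div_eq_inv_mul]
      · rw [hρtr_eq]; field_simp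
    have hT : (devm σtr * devm σtr * devm σtr).trace
        = μ^3 * (devm σ * devm σ * devm σ).trace := by
      rw [hstμ]
      simp only [Matrix.smul_mul, Matrix.mul_smul, Matrix.trace_smul, smul_eq_mul]
      ring
    have hden : Real.rpow (rho σtr ^ 2 / 2) (3/2)
        = μ^3 * Real.rpow (rho σ ^ 2 / 2) (3/2) := by
      rw [hρtrμ, show (μ * rho σ)^2/2 = μ^2 * (rho σ^2/2) by ring,
        rpow_scale μ _ hμpos.le (by positivity)]
    have hD : Real.rpow (rho σ ^ 2 / 2) (3/2) ≠ 0 := by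
      have hpos2 : (0:ℝ) < rho σ ^ 2 / 2 := by positivity
      exact ne_of_gt (Real.rpow_pos_of_pos hpos2 _)
    have hμ3 : μ^3 ≠ 0 := pow_ne_zero 3 (ne_of_gt hμpos)
    have hlodeeq : lode σtr = lode σ := by
      unfold lode
      rw [hT, hden]
      congr 2
      generalize hgen : Real.rpow (rho σ ^ 2 / 2) (3/2) = D at hD ⊢
      generalize (devm σ * devm σ * devm σ).trace = T
      rw [show 3 * Real.sqrt 3 / 2 * (μ^3 * T / 3) = μ^3 * (3 * Real.sqrt 3 / 2 * (T / 3)) by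
        ring, mul_div_mul_left _ _ hμ3]
    have hrhoEσ : rhoE e σ = rho σ * rW e (Real.cos (lode σtr)) := by
      rw [rhoE, if_neg hρne, hlodeeq]
    refine ⟨hp, ?_, ?_⟩
    · have h9 : rho σtr - Δl * c = rho σ := by rw [hρtr_eq]; ring
      rw [h9, max_eq_right hρpos.le]
    · rw [← hrhoEσ]; exact hf
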